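/- arXiv:2410.23795 — 8 statements merged into one kernel-verified Lean document; each statement's English description precedes it below -/
import Mathlib

section
/- Let $p$ be a prime, and let $p_1,\ldots,p_n$ be integers not divisible by $p$, and let $N$ be a natural number. Then there exist integers $R_1,\ldots,R_{n+1}$ such that $p_1^{R_1}p_2^{R_2}\cdots p_n^{R_n} \equiv 1 \pmod p$ and $p_1^{R_2}p_2^{R_3}\cdots p_n^{R_{n+1}} \equiv p_1^N \pmod p$. -/
/-!
Write `aᵢ = g ^ xᵢ` for a generator `g` of the cyclic group `(ZMod p)ˣ`, of order `m`. It suffices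
to find `R` with `∑ xᵢ Rᵢ ≡ 0` and `∑ xᵢ Rᵢ₊₁ ≡ x₀ (mod m)` and to multiply it by `N`. This pair of
linear congruences is solved prime power by prime power and glued by the Chinese remainder
theorem. Modulo `q ^ e`: if `q` divides every `xᵢ`, divide by `q` and use the solution modulo
`q ^ (e - 1)`; otherwise let `j` be the first index with `q ∤ xⱼ` and take `R` supported on
`{j, j + 1}`. The resulting `2 × 2` system has determinant `xⱼ² - xⱼ₊₁ xⱼ₋₁ ≡ xⱼ² (mod q)`,
a unit modulo `q ^ e`.
-/

theorem Finset.prod_zpow_eq_zpow_sum {ι G : Type*} [CommGroup G] (s : Finset ι) (f : ι → ℤ)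
    (a : G) : ∏ i ∈ s, a ^ f i = a ^ ∑ i ∈ s, f i := by
  classical
  induction s using Finset.induction_on with
  | empty => simp
  | insert i s hi ih => rw [prod_insert hi, sum_insert hi, ih, zpow_add]

section DotProduct

variable {R : Type*} [NonUnitalNonAssocSemiring R] {n : ℕ}

theorem Fin.snoc_zero_dotProduct (v : Fin n → R) (w : Fin (n + 1) → R) :
    (Fin.snoc v 0 : Fin (n + 1) → R) ⬝ᵥ w = ∑ i, v i * w i.castSucc := by
  simp [dotProduct, Fin.sum_univ_castSucc]

theorem Fin.cons_zero_dotProduct (v : Fin n → R) (w : Fin (n + 1) → R) :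
    (Fin.cons 0 v : Fin (n + 1) → R) ⬝ᵥ w = ∑ i, v i * w i.succ := by
  simp [dotProduct, Fin.sum_univ_succ]

end DotProduct

variable {ι : Type*} [Fintype ι]

def SolvableModEq (m : ℤ) (u w : ι → ℤ) (P Q : ℤ) : Prop :=
  ∃ R : ι → ℤ, u ⬝ᵥ R ≡ P [ZMOD m] ∧ w ⬝ᵥ R ≡ Q [ZMOD m]

namespace SolvableModEq

variable {m : ℤ} {u w : ι → ℤ} {P Q : ℤ}

theorem of_isCoprime_det [DecidableEq ι] (l l' : ι)
    (h : IsCoprime (u l * w l' - u l' * w l) m) : SolvableModEq m u w P Q := by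
  obtain ⟨D, c, hD⟩ := h
  refine ⟨Pi.single l ((P * w l' - Q * u l') * D) + Pi.single l' ((Q * u l - P * w l) * D),
    Int.modEq_iff_dvd.mpr ⟨P * c, ?_⟩, Int.modEq_iff_dvd.mpr ⟨Q * c, ?_⟩⟩ <;>
  simp only [dotProduct_add, dotProduct_single]
  · linear_combination (-P) * hD
  · linear_combination (-Q) * hD

theorem mul_left (c : ℤ) (h : SolvableModEq m u w P Q) :
    SolvableModEq (c * m) (c • u) (c • w) (c * P) (c * Q) := by
  obtain ⟨R, hu, hw⟩ := h
  exact ⟨R, by simpa only [smul_dotProduct, smul_eq_mul] using hu.mul_left' (c := c),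
    by simpa only [smul_dotProduct, smul_eq_mul] using hw.mul_left' (c := c)⟩

theorem mul_of_isCoprime {m₁ m₂ : ℤ} (h₁ : SolvableModEq m₁ u w P Q) (h₂ : SolvableModEq m₂ u w P Q)
    (h : IsCoprime m₁ m₂) : SolvableModEq (m₁ * m₂) u w P Q := by
  obtain ⟨a, b, hab⟩ := h
  obtain ⟨R₁, hu₁, hw₁⟩ := h₁
  obtain ⟨R₂, hu₂, hw₂⟩ := h₂
  have glue (v : ι → ℤ) (T : ℤ)
      (h₁ : v ⬝ᵥ R₁ ≡ T [ZMOD m₁]) (h₂ : v ⬝ᵥ R₂ ≡ T [ZMOD m₂]) :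
      v ⬝ᵥ ((b * m₂) • R₁ + (a * m₁) • R₂) ≡ T [ZMOD m₁ * m₂] := by
    rw [Int.modEq_iff_dvd] at h₁ h₂ ⊢
    rw [dotProduct_add, dotProduct_smul, dotProduct_smul, smul_eq_mul, smul_eq_mul]
    have hsplit : T - (b * m₂ * (v ⬝ᵥ R₁) + a * m₁ * (v ⬝ᵥ R₂))
        = b * m₂ * (T - v ⬝ᵥ R₁) + a * m₁ * (T - v ⬝ᵥ R₂) := by
      linear_combination (-T) * hab
    rw [hsplit]
    exact IsCoprime.mul_dvd ⟨a, b, hab⟩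
      (dvd_add (dvd_mul_of_dvd_right h₁ _) ((dvd_mul_left m₁ a).mul_right _))
      (dvd_add ((dvd_mul_left m₂ b).mul_right _) (dvd_mul_of_dvd_right h₂ _))
  exact ⟨(b * m₂) • R₁ + (a * m₁) • R₂, glue u P hu₁ hu₂, glue w Q hw₁ hw₂⟩

end SolvableModEq

section Shift

variable {k : ℕ}

theorem solvableModEq_shift_prime_pow {q : ℕ} (hq : q.Prime) (e : ℕ)
    (α : Fin (k + 1) → ℤ) :
    SolvableModEq ((q : ℤ) ^ e) (Fin.snoc α 0) (Fin.cons 0 α) 0 (α 0) := by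
  induction e generalizing α with
  | zero =>
    rw [pow_zero]
    exact ⟨0, Int.modEq_one, Int.modEq_one⟩
  | succ e ih =>
    by_cases hdvd : ∀ i, (q : ℤ) ∣ α i
    · choose β hβ using hdvd
      obtain rfl : α = (q : ℤ) • β := funext hβ
      have hsnoc :
          (Fin.snoc ((q : ℤ) • β) 0 : Fin (k + 2) → ℤ) = (q : ℤ) • Fin.snoc β 0 := by
        ext i
        refine Fin.lastCases ?_ (fun i ↦ ?_) i <;> simp
      have hcons :
          (Fin.cons 0 ((q : ℤ) • β) : Fin (k + 2) → ℤ) = (q : ℤ) • Fin.cons 0 β := by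
        ext i
        refine Fin.cases ?_ (fun i ↦ ?_) i <;> simp
      have h := (ih β).mul_left (q : ℤ)
      rwa [mul_zero, ← pow_succ', ← hsnoc, ← hcons] at h
    · push Not at hdvd
      obtain ⟨j, hj, hmin⟩ := wellFounded_lt.has_min {i | ¬ (q : ℤ) ∣ α i} hdvd
      have hq' : Prime (q : ℤ) := Nat.prime_iff_prime_int.mp hq
      have hprev : (q : ℤ) ∣ (Fin.cons 0 α : Fin (k + 2) → ℤ) j.castSucc := by
        cases j using Fin.cases with
        | zero => simp
        | succ i =>
          rw [← Fin.succ_castSucc, Fin.cons_succ]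
          by_contra h
          exact hmin _ h Fin.castSucc_lt_succ
      refine SolvableModEq.of_isCoprime_det j.castSucc j.succ (IsCoprime.pow_right ?_)
      rw [Fin.snoc_castSucc, Fin.cons_succ, isCoprime_comm, hq'.coprime_iff_not_dvd]
      intro hdet
      have hsq : (q : ℤ) ∣ α j * α j := (dvd_sub_left (dvd_mul_of_dvd_right hprev _)).mp hdet
      exact hj (or_self_iff.mp (hq'.dvd_mul.mp hsq))

theorem solvableModEq_shift (α : Fin (k + 1) → ℤ) {m : ℕ} (hm : m ≠ 0) :
    SolvableModEq (m : ℤ) (Fin.snoc α 0) (Fin.cons 0 α) 0 (α 0) := by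
  induction m using Nat.recOnPrimeCoprime with
  | zero => exact absurd rfl hm
  | prime_pow q e hq => exact_mod_cast solvableModEq_shift_prime_pow hq e α
  | coprime a b _ _ hab iha ihb =>
    push_cast
    exact (iha (by positivity)).mul_of_isCoprime (ihb (by positivity))
      (Nat.isCoprime_iff_coprime.mpr hab)

end Shift

theorem IsCyclic.exists_zpow_shift {G : Type*} [CommGroup G] [IsCyclic G] [Finite G] {k : ℕ}
    (a : Fin (k + 1) → G) :
    ∃ R : Fin (k + 2) → ℤ, ∏ i, a i ^ R i.castSucc = 1 ∧ ∏ i, a i ^ R i.succ = a 0 := by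
  obtain ⟨g, hg⟩ := IsCyclic.exists_generator (α := G)
  choose x hx using fun i ↦ Subgroup.mem_zpowers_iff.mp (hg (a i))
  obtain ⟨R, h₁, h₂⟩ := solvableModEq_shift x (orderOf_pos g).ne'
  have hprod (S : Fin (k + 1) → ℤ) : ∏ i, a i ^ S i = g ^ ∑ i, x i * S i := by
    simp only [← hx, ← zpow_mul, Finset.prod_zpow_eq_zpow_sum]
  refine ⟨R, ?_, ?_⟩
  · rw [hprod, ← zpow_zero g, zpow_eq_zpow_iff_modEq, ← Fin.snoc_zero_dotProduct]
    exact h₁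
  · rw [hprod, ← hx 0, zpow_eq_zpow_iff_modEq, ← Fin.cons_zero_dotProduct]
    exact h₂

/-- Let `p` be prime and `a 0, …, a (n+1)` integers not divisible by `p`
(a family of size `n+2 ≥ 2`), `N : ℕ`. Then there are integers `R_0, …, R_{n+2}` with
`∏ aᵢ ^ R_i ≡ 1 (mod p)` and `∏ aᵢ ^ R_{i+1} ≡ a₀ ^ N (mod p)`, exponentiation taken
in `(ℤ/p)ˣ` (i.e. with `zpow` in the field `ZMod p`). -/
theorem exists_multiplicative_solution (n : ℕ) (p : ℕ) [Fact p.Prime]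
    (a : Fin (n + 2) → ℤ) (ha : ∀ i, ¬ ((p : ℤ) ∣ a i)) (N : ℕ) :
    ∃ R : Fin (n + 3) → ℤ,
      (∏ i : Fin (n + 2), ((a i : ZMod p)) ^ (R i.castSucc)) = 1 ∧
      (∏ i : Fin (n + 2), ((a i : ZMod p)) ^ (R i.succ)) = ((a 0 : ZMod p)) ^ (N : ℤ) := by
  have hne (i : Fin (n + 2)) : (a i : ZMod p) ≠ 0 :=
    fun h ↦ ha i ((ZMod.intCast_zmod_eq_zero_iff_dvd _ _).mp h)
  set u : Fin (n + 2) → (ZMod p)ˣ := fun i ↦ Units.mk0 _ (hne i)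
  obtain ⟨R, h₁, h₂⟩ := IsCyclic.exists_zpow_shift u
  have hval (S : Fin (n + 2) → ℤ) :
      ∏ i, (a i : ZMod p) ^ (N * S i) = ((∏ i, u i ^ S i) ^ (N : ℤ) : (ZMod p)ˣ) := by
    simp [u, mul_comm (N : ℤ), zpow_mul, Finset.prod_pow]
  refine ⟨(N : ℤ) • R, ?_, ?_⟩
  · simp only [Pi.smul_apply, smul_eq_mul, hval, h₁, one_zpow, Units.val_one]
  · simp only [Pi.smul_apply, smul_eq_mul, hval, h₂, u, Units.val_zpow_eq_zpow_val, Units.val_mk0]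
end

section
/- Let $p_1,\ldots,p_n$ be distinct primes with $n\geq 3$, and $N,N'\in\mathbb{N}$. Define in $\mathbb{Q}^\times\times\mathbb{Q}^\times$ the elements $\lambda=(1,p_1^N)$, $\lambda'=(p_n^{N'},1)$, $\lambda_1=(p_1,1)$, $\lambda_i=(p_i,p_{i-1})$ for $2\leq i\leq n$, $\lambda_{n+1}=(1,p_n)$. Then the $n+3$ elements $\lambda,\lambda_1,\ldots,\lambda_{n+1},\lambda'$ are linearly independent over $\mathbb{Z}$ (i.e., no nontrivial integer combination of exponents gives the identity). -/
/-!
Read both coordinates through the `q k`-adic valuations. In the first coordinate the prime `q k`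
occurs only in `λ_{k+1}` (and in `λ'` when `k` is last), in the second only in `λ_{k+2}` (and in
`λ` when `k = 0`). So the first coordinate kills every `R j` except the last two, the second every
`R j` except the first two, and as soon as there are at least three primes these cover all `R j`;
what remains is `N * a = 0` and `N' * a' = 0`.
-/

theorem padicValRat_finset_prod (p : ℕ) [Fact p.Prime] {ι : Type*} (s : Finset ι) {f : ι → ℚ}
    (hf : ∀ i ∈ s, f i ≠ 0) :
    padicValRat p (∏ i ∈ s, f i) = ∑ i ∈ s, padicValRat p (f i) := by
  classical
  induction s using Finset.induction with
  | empty => simp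
  | insert b s hb ih =>
    rw [Finset.forall_mem_insert] at hf
    rw [Finset.prod_insert hb, Finset.sum_insert hb,
      padicValRat.mul hf.1 (Finset.prod_ne_zero_iff.2 hf.2), ih hf.2]

theorem padicValRat_prime {p r : ℕ} [Fact p.Prime] (hr : r.Prime) :
    padicValRat p r = if r = p then 1 else 0 := by
  split_ifs with h
  · exact h ▸ padicValRat.self hr.one_lt
  · have : Fact r.Prime := ⟨hr⟩
    rw [padicValRat.of_nat, padicValNat_primes (Ne.symm h), Nat.cast_zero]

section DistinctPrimes

variable {ι : Type*} [Fintype ι] [DecidableEq ι] {q : ι → ℕ}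

theorem padicValRat_prod_zpow_of_injective (hq : ∀ i, (q i).Prime) (hinj : q.Injective)
    (e : ι → ℤ) (k : ι) :
    padicValRat (q k) (∏ i, (q i : ℚ) ^ e i) = e k := by
  have : Fact (q k).Prime := ⟨hq k⟩
  rw [padicValRat_finset_prod _ _ fun i _ ↦ zpow_ne_zero _ (mod_cast (hq i).ne_zero)]
  simp only [padicValRat.zpow, padicValRat_prime (hq _), hinj.eq_iff, mul_ite, mul_one, mul_zero,
    Finset.sum_ite_eq', Finset.mem_univ, if_true]

theorem add_eq_zero_of_zpow_mul_prod_zpow_eq_one (hq : ∀ i, (q i).Prime) (hinj : q.Injective)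
    {j : ι} {m : ℤ} {e : ι → ℤ} (h : (q j : ℚ) ^ m * ∏ i, (q i : ℚ) ^ e i = 1) (k : ι) :
    (if j = k then m else 0) + e k = 0 := by
  have : Fact (q k).Prime := ⟨hq k⟩
  have hval := congrArg (padicValRat (q k)) h
  rw [padicValRat.mul (zpow_ne_zero _ (mod_cast (hq j).ne_zero))
      (Finset.prod_ne_zero_iff.2 fun i _ ↦ zpow_ne_zero _ (mod_cast (hq i).ne_zero)),
    padicValRat_prod_zpow_of_injective hq hinj, padicValRat.zpow, padicValRat_prime (hq j),
    padicValRat.one] at hval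
  simpa [hinj.eq_iff] using hval

end DistinctPrimes

theorem Fin.eq_zero_of_castSucc_of_succ {α : Type*} [Zero α] {m : ℕ} {R : Fin (m + 4) → α}
    (hcast : ∀ k : Fin (m + 3), k ≠ Fin.last _ → R k.castSucc = 0)
    (hsucc : ∀ k : Fin (m + 3), k ≠ 0 → R k.succ = 0) (j : Fin (m + 4)) : R j = 0 := by
  by_cases hj : (j : ℕ) ≤ 1
  · have := hcast ⟨j, by omega⟩ (by simp [Fin.ext_iff]; omega)
    rwa [show (⟨j, _⟩ : Fin (m + 3)).castSucc = j from rfl] at this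
  · have := hsucc ⟨j - 1, by omega⟩ (by simp [Fin.ext_iff]; omega)
    rwa [show (⟨j - 1, _⟩ : Fin (m + 3)).succ = j from Fin.ext (by simp; omega)] at this

/-- Let `q 0, …, q (n+2)` be distinct primes (family of size `n+3 ≥ 3`),
`N, N' ≥ 1`. In `ℚ^× × ℚ^×` the `n+6` elements `λ = (1, q₀ᴺ)`, `λ₁ = (q₀,1)`,
`λ_{j+1} = (q_j, q_{j-1})` for `1 ≤ j ≤ n+2`, `λ_{n+4} = (1, q_{n+2})`,
`λ' = (q_{n+2}^{N'}, 1)` are linearly independent over `ℤ`: if an integer-exponent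
product `λ^a · λ₁^{R₀} ⋯ λ_{n+4}^{R_{n+3}} · λ'^{a'}` equals `(1,1)` (written here
componentwise in `ℚ` with `zpow`), then all exponents vanish. -/
theorem wild_generators_linear_independent (n : ℕ) (q : Fin (n + 3) → ℕ)
    (hq : ∀ i, (q i).Prime) (hinj : Function.Injective q)
    (N N' : ℕ) (hN : 1 ≤ N) (hN' : 1 ≤ N')
    (a a' : ℤ) (R : Fin (n + 4) → ℤ)
    (h1 : (q (Fin.last (n + 2)) : ℚ) ^ ((N' : ℤ) * a') *
        ∏ i : Fin (n + 3), (q i : ℚ) ^ (R i.castSucc) = 1)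
    (h2 : (q 0 : ℚ) ^ ((N : ℤ) * a) *
        ∏ i : Fin (n + 3), (q i : ℚ) ^ (R i.succ) = 1) :
    a = 0 ∧ a' = 0 ∧ ∀ j, R j = 0 := by
  have v1 := add_eq_zero_of_zpow_mul_prod_zpow_eq_one hq hinj h1
  have v2 := add_eq_zero_of_zpow_mul_prod_zpow_eq_one hq hinj h2
  have hR : ∀ j, R j = 0 := Fin.eq_zero_of_castSucc_of_succ
    (fun k hk ↦ by simpa [Ne.symm hk] using v1 k) (fun k hk ↦ by simpa [Ne.symm hk] using v2 k)
  have hNa : (N : ℤ) * a = 0 := by simpa [hR] using v2 0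
  have hNa' : (N' : ℤ) * a' = 0 := by simpa [hR] using v1 (Fin.last _)
  exact ⟨(mul_eq_zero.1 hNa).resolve_left (by omega),
    (mul_eq_zero.1 hNa').resolve_left (by omega), hR⟩
end

section
/- With $\lambda,\lambda',\lambda_1,\ldots,\lambda_{n+1}$ as in the wild 1-motive construction ($n\geq 3$), let $\Lambda$ be the subgroup of $\mathbb{Q}^\times\times\mathbb{Q}^\times$ generated by $\lambda,\lambda_1,\ldots,\lambda_{n+1}$ and $\Lambda'$ the subgroup generated by $\lambda_1,\ldots,\lambda_{n+1},\lambda'$. Then $\Lambda\cap\Lambda'$ equals the subgroup generated by $\lambda_1,\ldots,\lambda_{n+1}$; in particular $\lambda\notin\Lambda'$ and $\lambda'\notin\Lambda$. -/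
/-!
Each of `λ`, `λ'` is detected by a homomorphism `ℚˣ × ℚˣ → ℤ` built from two `p`-adic
valuations: `φ (x, y) = v_{p₁}(y) - v_{p₂}(x)` vanishes on every `λᵢ` (the terms telescope)
and on `λ'`, while `φ λ = N ≠ 0`; symmetrically `ψ (x, y) = v_{p_{n-1}}(y) - v_{pₙ}(x)` kills the
`λᵢ` and `λ`, while `ψ λ' = -N'`. As the group is commutative, every element of `Λ` is
`λ ^ k * z` with `z ∈ ⟨λᵢ⟩`; if it also lies in `Λ' ⊆ ker φ`, then `k * N = 0`, so `k = 0`.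
-/

/-- The generators `λ₁ = (u 0, 1)`, `λ_{j+1} = (u j, u (j-1))` for `1 ≤ j ≤ n`,
`λ_{n+2} = (1, u (n))` (indices 0-based, family `u` of size `n+1`). -/
def wildGens {G : Type*} [Group G] {n : ℕ} (u : Fin (n + 1) → G) :
    Fin (n + 2) → G × G := fun j =>
  (if h : (j : ℕ) < n + 1 then u ⟨j, h⟩ else 1,
   if h : 0 < (j : ℕ) then u ⟨(j : ℕ) - 1, by have := j.isLt; omega⟩ else 1)

namespace Subgroup

variable {G H : Type*} [Group H] {S : Set G} {a b : G}

theorem notMem_closure_insert_of_ker [Group G] (f : G →* H) (hS : S ⊆ f.ker) (ha : f a ≠ 1)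
    (hb : f b = 1) : a ∉ closure (insert b S) :=
  fun h ↦ ha ((closure_le _).2 (Set.insert_subset hb hS) h)

theorem closure_insert_inf_closure_insert_of_ker [CommGroup G] [IsMulTorsionFree H]
    (f : G →* H) (hS : S ⊆ f.ker) (ha : f a ≠ 1) (hb : f b = 1) :
    closure (insert a S) ⊓ closure (insert b S) = closure S := by
  refine le_antisymm ?_ (le_inf (closure_mono (Set.subset_insert _ _))
    (closure_mono (Set.subset_insert _ _)))
  intro x hx
  obtain ⟨hxa, hxb⟩ := mem_inf.1 hx
  rw [Set.insert_eq, closure_union, ← zpowers_eq_closure, mem_sup] at hxa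
  obtain ⟨_, ⟨k, rfl⟩, z, hz, rfl⟩ := hxa
  have hz1 : f z = 1 := (closure_le _).2 hS hz
  have hk : k = 0 := by
    simpa [hz1, ha] using ((closure_le _).2 (Set.insert_subset hb hS) hxb : f (a ^ k * z) = 1)
  simpa [hk] using hz

end Subgroup

section WildGens

variable {G M : Type*} [Group G] {n : ℕ} (u : Fin (n + 1) → G)

theorem wildGens_zero : wildGens u 0 = (u 0, 1) := by
  simp [wildGens]

theorem wildGens_last : wildGens u (Fin.last (n + 1)) = (1, u (Fin.last n)) := by
  simp [wildGens, Fin.last]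

theorem wildGens_castSucc_succ (i : Fin n) :
    wildGens u i.castSucc.succ = (u i.succ, u i.castSucc) := by
  simp [wildGens, Fin.succ, Fin.castSucc, Fin.castAdd, Fin.castLE]

theorem range_wildGens_subset_ker [CommGroup M] (α β : G →* M) (h0 : β (u 0) = 1)
    (hlast : α (u (Fin.last n)) = 1) (hstep : ∀ i : Fin n, α (u i.castSucc) = β (u i.succ)) :
    Set.range (wildGens u) ⊆ (α.comp (MonoidHom.snd G G) / β.comp (MonoidHom.fst G G)).ker := by
  rintro _ ⟨j, rfl⟩
  rw [SetLike.mem_coe, MonoidHom.mem_ker, MonoidHom.div_apply, div_eq_one]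
  induction j using Fin.cases with
  | zero => simp [wildGens_zero, h0]
  | succ k =>
    induction k using Fin.lastCases with
    | last => simp [wildGens_last, hlast]
    | cast i => simp [wildGens_castSucc_succ, hstep]

end WildGens

def padicValUnits (p : ℕ) [Fact p.Prime] : ℚˣ →* Multiplicative ℤ where
  toFun x := Multiplicative.ofAdd (padicValRat p x)
  map_one' := by simp
  map_mul' x y := by simp [padicValRat.mul x.ne_zero y.ne_zero, ofAdd_add]

theorem padicValUnits_apply_eq_ite {ι : Type*} [DecidableEq ι] {q : ι → ℕ}
    [∀ i, Fact (q i).Prime] (hinj : Function.Injective q) {u : ι → ℚˣ}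
    (hu : ∀ i, (u i : ℚ) = q i) (i j : ι) :
    padicValUnits (q j) (u i) = if i = j then Multiplicative.ofAdd 1 else 1 := by
  simp only [padicValUnits, MonoidHom.coe_mk, OneHom.coe_mk, hu, padicValRat.of_nat]
  split_ifs with h
  · simp [h, (Fact.out : (q j).Prime).one_lt]
  · simp [padicValNat_primes (hinj.ne (Ne.symm h))]

/-- Let `q 0, …, q (n+2)` be distinct primes (family of size `n+3 ≥ 3`),
`N, N' ≥ 1`, and `u i : ℚˣ` the unit corresponding to `q i`. Let
`Λ = ⟨λ, λ₁, …, λ_{n+4}⟩` and `Λ' = ⟨λ₁, …, λ_{n+4}, λ'⟩` in `ℚˣ × ℚˣ`, where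
`λ = (1, q₀ᴺ)` and `λ' = (q_{n+2}^{N'}, 1)`. Then `Λ ⊓ Λ' = ⟨λ₁, …, λ_{n+4}⟩`; in
particular `λ ∉ Λ'` and `λ' ∉ Λ`. -/
theorem inf_of_wild_subgroups (n : ℕ) (q : Fin (n + 3) → ℕ)
    (hq : ∀ i, (q i).Prime) (hinj : Function.Injective q)
    (N N' : ℕ) (hN : 1 ≤ N) (hN' : 1 ≤ N')
    (u : Fin (n + 3) → ℚˣ) (hu : ∀ i, (u i : ℚ) = (q i : ℚ)) :
    Subgroup.closure (insert ((1 : ℚˣ), (u 0) ^ N) (Set.range (wildGens u))) ⊓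
        Subgroup.closure (insert ((u (Fin.last (n + 2))) ^ N', (1 : ℚˣ))
          (Set.range (wildGens u)))
      = Subgroup.closure (Set.range (wildGens u)) ∧
    ((1 : ℚˣ), (u 0) ^ N) ∉
        Subgroup.closure (insert ((u (Fin.last (n + 2))) ^ N', (1 : ℚˣ))
          (Set.range (wildGens u))) ∧
    ((u (Fin.last (n + 2))) ^ N', (1 : ℚˣ)) ∉
        Subgroup.closure (insert ((1 : ℚˣ), (u 0) ^ N) (Set.range (wildGens u))) := by
  have : ∀ i, Fact (q i).Prime := fun i ↦ ⟨hq i⟩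
  have hv := padicValUnits_apply_eq_ite hinj hu
  set a : ℚˣ × ℚˣ := (1, u 0 ^ N)
  set b : ℚˣ × ℚˣ := (u (Fin.last (n + 2)) ^ N', 1)
  let v i := padicValUnits (q i)
  let φ := (v 0).comp (MonoidHom.snd ℚˣ ℚˣ) / (v 1).comp (MonoidHom.fst ℚˣ ℚˣ)
  let ψ := (v ⟨n + 1, by omega⟩).comp (MonoidHom.snd ℚˣ ℚˣ) /
    (v (Fin.last _)).comp (MonoidHom.fst ℚˣ ℚˣ)
  have hφS : Set.range (wildGens u) ⊆ φ.ker := range_wildGens_subset_ker u _ _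
    (by simp [v, hv]) (by simp [v, hv])
    fun i ↦ by simp only [v, hv, ← Fin.succ_zero_eq_one, Fin.succ_inj, Fin.castSucc_eq_zero_iff]
  have hψS : Set.range (wildGens u) ⊆ ψ.ker := range_wildGens_subset_ker u _ _
    (by simp [v, hv]) (by simp [v, hv, Fin.ext_iff]) (by simp [v, hv, Fin.ext_iff])
  have hφa : φ a ≠ 1 := by simpa [φ, v, a, hv] using Nat.one_le_iff_ne_zero.1 hN
  have hφb : φ b = 1 := by simp [φ, v, b, hv, Fin.ext_iff]
  have hψa : ψ a = 1 := by simp [ψ, v, a, hv]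
  have hψb : ψ b ≠ 1 := by simpa [ψ, v, b, hv] using Nat.one_le_iff_ne_zero.1 hN'
  exact ⟨Subgroup.closure_insert_inf_closure_insert_of_ker φ hφS hφa hφb,
    Subgroup.notMem_closure_insert_of_ker φ hφS hφa hφb,
    Subgroup.notMem_closure_insert_of_ker ψ hψS hψb hψa⟩
end

section
/- Schinzel's example: in $\mathbb{F}_p^\times\times\mathbb{F}_p^\times$ for any prime $p\neq 2,3$, the element $(1,2^4)$ (reduction of $(1,16)$) lies in the subgroup generated by $(2,1)$, $(3,2)$, and $(1,3)$. -/
open Subgroup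

lemma fst_zpow' {M N : Type*} [Group M] [Group N] (x : M × N) (n : ℤ) : (x ^ n).1 = x.1 ^ n := rfl
lemma snd_zpow' {M N : Type*} [Group M] [Group N] (x : M × N) (n : ℤ) : (x ^ n).2 = x.2 ^ n := rfl

lemma mem_zpowers_of_pow_orderOf_eq_one {G : Type*} [Group G] [Fintype G] [IsCyclic G]
    (u z : G) (h : z ^ orderOf u = 1) : z ∈ Subgroup.zpowers u := by
  obtain ⟨g, hg⟩ := IsCyclic.exists_generator (α := G)
  obtain ⟨x, hx⟩ := (mem_powers_iff_mem_zpowers (x := g)).2 (hg u)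
  obtain ⟨s, hs⟩ := (mem_powers_iff_mem_zpowers (x := g)).2 (hg z)
  simp only at hx hs
  have hog : orderOf g = Nat.card G := orderOf_eq_card_of_forall_mem_zpowers hg
  set n := Nat.card G with hn
  have hnpos : 0 < n := Nat.card_pos
  have hou : orderOf u = n / Nat.gcd n x := by
    rw [← hx, orderOf_pow, hog]
  have hdvd : n ∣ s * (n / Nat.gcd n x) := by
    have h1 : g ^ (s * (n / Nat.gcd n x)) = 1 := by
      rw [pow_mul, hs, ← hou, h]
    have := orderOf_dvd_of_pow_eq_one h1
    rwa [hog] at this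
  have hgd : Nat.gcd n x ∣ s := by
    have hpos : 0 < Nat.gcd n x := Nat.gcd_pos_of_pos_left x hnpos
    have hq : 0 < n / Nat.gcd n x := Nat.div_pos (Nat.le_of_dvd hnpos (Nat.gcd_dvd_left n x)) hpos
    have hkey : Nat.gcd n x * (n / Nat.gcd n x) = n := Nat.mul_div_cancel' (Nat.gcd_dvd_left n x)
    have h2 : Nat.gcd n x * (n / Nat.gcd n x) ∣ s * (n / Nat.gcd n x) := by rw [hkey]; exact hdvd
    exact (Nat.mul_dvd_mul_iff_right hq).1 h2
  obtain ⟨q, hq⟩ := hgd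
  have hbez : (Nat.gcd n x : ℤ) = n * Nat.gcdA n x + x * Nat.gcdB n x := Nat.gcd_eq_gcd_ab n x
  refine ⟨(q : ℤ) * Nat.gcdB n x, ?_⟩
  show u ^ ((q : ℤ) * Nat.gcdB n x) = z
  have hu : u = g ^ (x : ℤ) := by rw [zpow_natCast, hx]
  have hgn : g ^ (n : ℤ) = 1 := by rw [zpow_natCast, ← hog, pow_orderOf_eq_one]
  have key : g ^ ((s : ℤ)) = g ^ ((x : ℤ) * ((q : ℤ) * Nat.gcdB n x)) * (g ^ ((n:ℤ))) ^ ((q:ℤ) * Nat.gcdA n x) := by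
    rw [← zpow_mul, ← zpow_add]
    congr 1
    have hsq : (s : ℤ) = (Nat.gcd n x : ℤ) * q := by exact_mod_cast hq
    rw [hsq, hbez]; ring
  rw [hu, ← zpow_mul]
  rw [hgn, one_zpow, mul_one] at key
  rw [← key, zpow_natCast, hs]

lemma exists_exponent {G : Type*} [Group G] [Fintype G] [IsCyclic G] (u v : G) :
    ∃ b : ℕ, v ^ b ∈ Subgroup.zpowers u ∧ u ^ ((b : ℤ) - 4) ∈ Subgroup.zpowers v := by
  set m := orderOf u with hm
  set k := orderOf v with hk
  have hmpos : 0 < m := orderOf_pos u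
  have hkpos : 0 < k := orderOf_pos v
  set g0 := Nat.gcd k m with hg0
  have hg0pos : 0 < g0 := Nat.gcd_pos_of_pos_left m hkpos
  have hkeq : g0 * (k / g0) = k := Nat.mul_div_cancel' (Nat.gcd_dvd_left k m)
  have hmeq : g0 * (m / g0) = m := Nat.mul_div_cancel' (Nat.gcd_dvd_right k m)
  have hco : Nat.Coprime (k / g0) (m / g0) := Nat.coprime_div_gcd_div_gcd hg0pos
  obtain ⟨b, hb1, hb2⟩ := Nat.chineseRemainder hco 0 4
  refine ⟨b, ?_, ?_⟩
  · apply mem_zpowers_of_pow_orderOf_eq_one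
    rw [← pow_mul, ← hm, ← orderOf_dvd_iff_pow_eq_one, ← hk]
    obtain ⟨c, hc⟩ := (Nat.modEq_zero_iff_dvd).1 hb1
    calc k = g0 * (k / g0) := hkeq.symm
    _ ∣ b * m := by rw [hc, ← hmeq]; exact ⟨c * (m / g0), by ring⟩
  · apply mem_zpowers_of_pow_orderOf_eq_one
    rw [← zpow_natCast, ← zpow_mul, ← hk, ← orderOf_dvd_iff_zpow_eq_one, ← hm]
    have hdvd : ((m / g0 : ℕ) : ℤ) ∣ (b : ℤ) - 4 := (Nat.ModEq.dvd hb2.symm)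
    obtain ⟨c, hc⟩ := hdvd
    calc (m : ℤ) = (g0 : ℤ) * ((m / g0 : ℕ) : ℤ) := by exact_mod_cast hmeq.symm
    _ ∣ ((b : ℤ) - 4) * k := by
        rw [hc]
        refine ⟨c * ((k / g0 : ℕ) : ℤ), ?_⟩
        have hkz : (k : ℤ) = (g0 : ℤ) * ((k / g0 : ℕ) : ℤ) := by exact_mod_cast hkeq.symm
        rw [hkz]; ring

/-- Schinzel's example: For any prime `p ∉ {2,3}`, in
`(ZMod p)ˣ × (ZMod p)ˣ` the element `(1, 2⁴)` lies in the subgroup generated by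
`(2,1)`, `(3,2)` and `(1,3)` (where `u2, u3` are the units of `ZMod p` reducing
`2` and `3`). -/
theorem schinzel_reduction (p : ℕ) [Fact p.Prime] (hp2 : p ≠ 2) (hp3 : p ≠ 3)
    (u2 u3 : (ZMod p)ˣ) (h2 : (u2 : ZMod p) = 2) (h3 : (u3 : ZMod p) = 3) :
    ((1 : (ZMod p)ˣ), u2 ^ 4) ∈
      Subgroup.closure ({(u2, 1), (u3, u2), (1, u3)} :
        Set ((ZMod p)ˣ × (ZMod p)ˣ)) := by
  obtain ⟨b, hb1, hb2⟩ := exists_exponent u2 u3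
  obtain ⟨s, hs⟩ := hb1
  obtain ⟨t, ht⟩ := hb2
  simp only at hs ht
  have hA : ((u2, 1) : (ZMod p)ˣ × (ZMod p)ˣ) ∈ Subgroup.closure
      ({(u2, 1), (u3, u2), (1, u3)} : Set ((ZMod p)ˣ × (ZMod p)ˣ)) :=
    Subgroup.subset_closure (by simp)
  have hB : ((u3, u2) : (ZMod p)ˣ × (ZMod p)ˣ) ∈ Subgroup.closure
      ({(u2, 1), (u3, u2), (1, u3)} : Set ((ZMod p)ˣ × (ZMod p)ˣ)) :=
    Subgroup.subset_closure (by simp)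
  have hC : ((1, u3) : (ZMod p)ˣ × (ZMod p)ˣ) ∈ Subgroup.closure
      ({(u2, 1), (u3, u2), (1, u3)} : Set ((ZMod p)ˣ × (ZMod p)ˣ)) :=
    Subgroup.subset_closure (by simp)
  have hs' : u3 ^ (b : ℤ) = u2 ^ s := by rw [zpow_natCast, hs]
  have key : ((1 : (ZMod p)ˣ), u2 ^ 4) =
      ((u2, 1) : (ZMod p)ˣ × (ZMod p)ˣ) ^ (-s) * ((u3, u2) : (ZMod p)ˣ × (ZMod p)ˣ) ^ (b : ℤ)
        * ((1, u3) : (ZMod p)ˣ × (ZMod p)ˣ) ^ (-t) := by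
    rw [Prod.ext_iff]
    constructor
    · simp only [Prod.fst_mul, fst_zpow', one_zpow, mul_one]
      rw [hs', ← zpow_add, neg_add_cancel, zpow_zero]
    · simp only [Prod.snd_mul, snd_zpow', one_zpow, one_mul]
      rw [zpow_neg, ht, ← zpow_neg, ← zpow_add, neg_sub]
      rw [show (b : ℤ) + (4 - (b : ℤ)) = ((4 : ℕ) : ℤ) by push_cast; ring, zpow_natCast]
  rw [key]
  exact mul_mem (mul_mem (zpow_mem hA _) (zpow_mem hB _)) (zpow_mem hC _)
end

section
/- In Schinzel's example, the point $(1,16)\in\mathbb{Q}^\times\times\mathbb{Q}^\times$ does not lie in the subgroup generated by $(2,1)$, $(3,2)$, $(1,3)$, even though its reduction mod $p$ lies in the reduced subgroup for every prime $p$. -/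
/-!
The map `(a, b) ↦ v₂(b) - v₃(a)` is a homomorphism `ℚˣ × ℚˣ → ℤ` that kills the three generators
but sends `(1, 16)` to `4`, so `(1, 16)` is not in the global subgroup.

Modulo `p` the picture is different because `(ℤ/p)ˣ` is cyclic. In any cyclic group, write
`g = k ^ x` and `h = k ^ y` with `x = d x'`, `y = d y'`, `d = gcd x y = u x + v y`. Then
`(g, 1)^(-u y') (h, g)^(u x') (1, h)^(v x') = (1, g)`, so `(1, g)` and hence `(1, g⁴)` lie in the
subgroup generated by `(g, 1)`, `(h, g)`, `(1, h)`.
-/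

open Subgroup

theorem mk_one_zpow_mem_closure {G : Type*} [Group G] (k : G) (x y : ℤ) :
    ((1 : G), k ^ x) ∈ closure {(k ^ x, 1), (k ^ y, k ^ x), (1, k ^ y)} := by
  obtain ⟨x', hx⟩ := Int.gcd_dvd_left x y
  obtain ⟨y', hy⟩ := Int.gcd_dvd_right x y
  set u := x.gcdA y
  set v := x.gcdB y
  have bezout : (x.gcd y : ℤ) = x * u + y * v := Int.gcd_eq_gcd_ab x y
  have hfst : x * (-u * y') + y * (u * x') = 0 := by
    linear_combination (u * x') * hy - (u * y') * hx
  have hsnd : x * (u * x') + y * (v * x') = x := by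
    linear_combination -hx - x' * bezout
  have hmem : ((k ^ x, 1) : G × G) ^ (-u * y') * (k ^ y, k ^ x) ^ (u * x') * (1, k ^ y) ^ (v * x')
      ∈ closure {(k ^ x, 1), (k ^ y, k ^ x), (1, k ^ y)} := by
    refine mul_mem (mul_mem ?_ ?_) ?_ <;> exact zpow_mem (subset_closure (by simp)) _
  convert hmem using 1
  ext <;> simp only [Prod.fst_mul, Prod.snd_mul, Prod.pow_fst, Prod.pow_snd, one_zpow, mul_one,
    one_mul, ← zpow_mul, ← zpow_add, hfst, hsnd, zpow_zero]

theorem IsCyclic.mk_one_mem_closure {G : Type*} [Group G] [IsCyclic G] (g h : G) :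
    ((1 : G), g) ∈ closure {(g, 1), (h, g), (1, h)} := by
  obtain ⟨k, hk⟩ := IsCyclic.exists_generator (α := G)
  obtain ⟨x, rfl⟩ := mem_zpowers_iff.mp (hk g)
  obtain ⟨y, rfl⟩ := mem_zpowers_iff.mp (hk h)
  exact mk_one_zpow_mem_closure k x y

noncomputable def padicValUnitsHom (p : ℕ) [Fact p.Prime] : ℚˣ →* Multiplicative ℤ where
  toFun q := .ofAdd (padicValRat p q)
  map_one' := by simp
  map_mul' q r := by simp [padicValRat.mul q.ne_zero r.ne_zero, ofAdd_add]

noncomputable def schinzelInvariant : ℚˣ × ℚˣ →* Multiplicative ℤ :=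
  (padicValUnitsHom 2).comp (MonoidHom.snd ℚˣ ℚˣ) / (padicValUnitsHom 3).comp (MonoidHom.fst ℚˣ ℚˣ)

theorem schinzelInvariant_apply (x y : ℚˣ) :
    schinzelInvariant (x, y) = .ofAdd (padicValRat 2 y - padicValRat 3 x) := rfl

/-- In Schinzel's example, `γ = (1,16) ∈ ℚˣ × ℚˣ` does not lie in the
subgroup `Γ₀` generated by `(2,1)`, `(3,2)`, `(1,3)`, even though for every prime
`p ∉ {2,3}` its reduction mod `p` lies in the reduced subgroup. -/
theorem schinzel_global_failure :
    ((1 : ℚˣ), (Units.mk0 (16 : ℚ) (by norm_num))) ∉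
      Subgroup.closure ({((Units.mk0 (2 : ℚ) (by norm_num)), 1),
          ((Units.mk0 (3 : ℚ) (by norm_num)), (Units.mk0 (2 : ℚ) (by norm_num))),
          (1, (Units.mk0 (3 : ℚ) (by norm_num)))} : Set (ℚˣ × ℚˣ)) ∧
    ∀ (p : ℕ), p.Prime → p ≠ 2 → p ≠ 3 →
      ∀ u2 u3 : (ZMod p)ˣ, (u2 : ZMod p) = 2 → (u3 : ZMod p) = 3 →
        ((1 : (ZMod p)ˣ), u2 ^ 4) ∈
          Subgroup.closure ({(u2, 1), (u3, u2), (1, u3)} :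
            Set ((ZMod p)ˣ × (ZMod p)ˣ)) := by
  refine ⟨fun hmem => ?_, fun p hp _ _ u2 u3 _ _ => ?_⟩
  · have v22 : padicValRat 2 2 = 1 := by exact_mod_cast padicValRat.self (p := 2) one_lt_two
    have v33 : padicValRat 3 3 = 1 := by exact_mod_cast padicValRat.self (p := 3) (by norm_num)
    have v32 : padicValRat 3 2 = 0 := by
      simpa [padicValNat.eq_zero_of_not_dvd] using padicValRat.of_nat (p := 3) (n := 2)
    have v23 : padicValRat 2 3 = 0 := by
      simpa [padicValNat.eq_zero_of_not_dvd] using padicValRat.of_nat (p := 2) (n := 3)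
    have v216 : padicValRat 2 16 = 4 := by
      rw [show (16 : ℚ) = 2 ^ 4 by norm_num, padicValRat.pow, v22]; norm_num
    have hker := (closure_le _).mpr (show _ ⊆ (schinzelInvariant.ker : Set (ℚˣ × ℚˣ)) by
      simp [Set.insert_subset_iff, schinzelInvariant_apply, v22, v33, v32, v23]) hmem
    simp [schinzelInvariant_apply, v216] at hker
  · have := Fact.mk hp
    simpa using pow_mem (IsCyclic.mk_one_mem_closure u2 u3) 4
end

section
/- Let $p$ be a prime and $a,b,N$ integers coprime to $p$. If $g$ is a primitive root mod $p$ with $a\equiv g^{c_1}$, $b\equiv g^{c_2} \pmod p$, then the system $a^{x_1}b^{x_2}\equiv 1$, $a^{x_2}b^{x_3}\equiv a^N \pmod p$ has an integer solution $(x_1,x_2,x_3)$. -/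
/-! Since `a = g ^ c₁` and `b = g ^ c₂`, both congruences become equalities of exponents of `g`,
and it suffices to solve `c₁ x₁ + c₂ x₂ = 0`, `c₁ x₂ + c₂ x₃ = c₁ N` over `ℤ` exactly. After
dividing `c₁, c₂` by their gcd they become coprime `u, v`, and from `u' u + v' v = 1` the triple
`(-v u' N, u u' N, u v' N)` is a solution. -/

theorem IsCoprime.exists_mul_add_mul_eq_zero_and_mul_add_mul_eq_mul {R : Type*} [CommRing R]
    {u v : R} (h : IsCoprime u v) (N : R) :
    ∃ x₁ x₂ x₃ : R, u * x₁ + v * x₂ = 0 ∧ u * x₂ + v * x₃ = u * N := by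
  obtain ⟨u', v', huv⟩ := h
  exact ⟨-v * u' * N, u * u' * N, u * v' * N, by ring, by linear_combination u * N * huv⟩

theorem exists_mul_add_mul_eq_zero_and_mul_add_mul_eq_mul {R : Type*} [CommRing R] [IsDomain R]
    [IsBezout R] [GCDMonoid R] (c₁ c₂ N : R) :
    ∃ x₁ x₂ x₃ : R, c₁ * x₁ + c₂ * x₂ = 0 ∧ c₁ * x₂ + c₂ * x₃ = c₁ * N := by
  obtain ⟨u, v, hu, hv, hunit⟩ := extract_gcd c₁ c₂
  obtain ⟨x₁, x₂, x₃, e₁, e₂⟩ :=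
    ((gcd_isUnit_iff u v).mp hunit).exists_mul_add_mul_eq_zero_and_mul_add_mul_eq_mul N
  refine ⟨x₁, x₂, x₃, ?_, ?_⟩
  · linear_combination gcd c₁ c₂ * e₁ + x₁ * hu + x₂ * hv
  · linear_combination gcd c₁ c₂ * e₂ + (x₂ - N) * hu + x₃ * hv

theorem zpow_zpow_mul_zpow_zpow {G₀ : Type*} [GroupWithZero G₀] {γ : G₀} (hγ : γ ≠ 0)
    (c₁ c₂ x₁ x₂ : ℤ) : (γ ^ c₁) ^ x₁ * (γ ^ c₂) ^ x₂ = γ ^ (c₁ * x₁ + c₂ * x₂) := by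
  rw [← zpow_mul, ← zpow_mul, zpow_add₀ hγ]

theorem two_base_system_solvable_general (p : ℕ) [Fact p.Prime] (a b N : ℤ)
    (g : (ZMod p)ˣ)
    (c1 c2 : ℤ) (h1 : (a : ZMod p) = ((g : ZMod p)) ^ c1)
    (h2 : (b : ZMod p) = ((g : ZMod p)) ^ c2) :
    ∃ x1 x2 x3 : ℤ,
      (a : ZMod p) ^ x1 * (b : ZMod p) ^ x2 = 1 ∧
      (a : ZMod p) ^ x2 * (b : ZMod p) ^ x3 = (a : ZMod p) ^ N := by
  obtain ⟨x1, x2, x3, e1, e2⟩ := exists_mul_add_mul_eq_zero_and_mul_add_mul_eq_mul c1 c2 N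
  refine ⟨x1, x2, x3, ?_, ?_⟩
  · rw [h1, h2, zpow_zpow_mul_zpow_zpow g.ne_zero, e1, zpow_zero]
  · rw [h1, h2, zpow_zpow_mul_zpow_zpow g.ne_zero, e2, zpow_mul]

/-- Let `p` be prime and `a, b, N` integers with `a, b` coprime to `p`.
If `g` is a primitive root mod `p` (a generator of `(ZMod p)ˣ`) with `a ≡ g^{c₁}` and
`b ≡ g^{c₂} (mod p)`, then the system `a^{x₁} b^{x₂} ≡ 1` and `a^{x₂} b^{x₃} ≡ a^N (mod p)`
has an integer solution `(x₁, x₂, x₃)` (exponentiation via `zpow` in the field `ZMod p`). -/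
theorem two_base_system_solvable (p : ℕ) [Fact p.Prime] (a b N : ℤ)
    (ha : ¬ ((p : ℤ) ∣ a)) (hb : ¬ ((p : ℤ) ∣ b))
    (g : (ZMod p)ˣ) (hg : ∀ x : (ZMod p)ˣ, x ∈ Subgroup.zpowers g)
    (c1 c2 : ℤ) (h1 : (a : ZMod p) = ((g : ZMod p)) ^ c1)
    (h2 : (b : ZMod p) = ((g : ZMod p)) ^ c2) :
    ∃ x1 x2 x3 : ℤ,
      (a : ZMod p) ^ x1 * (b : ZMod p) ^ x2 = 1 ∧
      (a : ZMod p) ^ x2 * (b : ZMod p) ^ x3 = (a : ZMod p) ^ N :=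
  two_base_system_solvable_general p a b N g c1 c2 h1 h2
end

section
/- Let $c_1,\ldots,c_n$ be nonzero integers ($n\geq 2$), $D_0=\gcd(c_1,\ldots,c_n)$, and $N\in\mathbb{Z}$. Then there exist integers $r_2,\ldots,r_{n+1}$ with $(c_1^2/D_0)r_2 + (c_1c_2/D_0)r_3 + \cdots + (c_1c_{n-1}/D_0)r_n + c_n r_{n+1} = Nc_1$. -/
/-- Bezout for finite families of integers. -/
lemma bezout_finset {ι : Type*} [DecidableEq ι] (s : Finset ι) (f : ι → ℤ) :
    ∃ x : ι → ℤ, ∑ i ∈ s, f i * x i = s.gcd f := by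
  classical
  induction s using Finset.induction with
  | empty => exact ⟨0, by simp⟩
  | @insert a s ha ih =>
    obtain ⟨x, hx⟩ := ih
    refine ⟨fun i => if i = a then Int.gcdA (f a) (s.gcd f)
        else Int.gcdB (f a) (s.gcd f) * x i, ?_⟩
    rw [Finset.sum_insert ha, Finset.gcd_insert]
    have h1 : ∑ i ∈ s, f i * (if i = a then Int.gcdA (f a) (s.gcd f)
        else Int.gcdB (f a) (s.gcd f) * x i)
        = Int.gcdB (f a) (s.gcd f) * ∑ i ∈ s, f i * x i := by
      rw [Finset.mul_sum]
      refine Finset.sum_congr rfl fun i hi => ?_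
      have : i ≠ a := fun h => ha (h ▸ hi)
      simp [this]; ring
    have hg : (gcd (f a) (s.gcd f) : ℤ) = (Int.gcd (f a) (s.gcd f) : ℤ) :=
      (Int.coe_gcd _ _).symm
    rw [h1, hx]
    simp only [if_pos rfl, if_true]
    rw [hg, Int.gcd_eq_gcd_ab (f a) (s.gcd f)]; ring

/-- Let `c 0, …, c (n+1)` be nonzero integers (family of size `n+2 ≥ 2`),
`D₀` their gcd, `N : ℤ`. Then the linear Diophantine equation
`(c₀²/D₀) r₂ + (c₀c₁/D₀) r₃ + ⋯ + (c₀c_n/D₀) r_{n+1} + c_{n+1} t = N c₀`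
has an integer solution (the `i = 0` coefficient `c₀·c₀/D₀` is `c₀²/D₀`). -/
theorem diophantine_solvable (n : ℕ) (c : Fin (n + 2) → ℤ) (hc : ∀ i, c i ≠ 0)
    (D0 : ℤ) (hD0 : D0 = Finset.univ.gcd c) (N : ℤ) :
    ∃ (r : Fin (n + 1) → ℤ) (t : ℤ),
      (∑ i : Fin (n + 1), (c 0 * c i.castSucc / D0) * r i) +
        c (Fin.last (n + 1)) * t = N * c 0 := by
  have hD0ne : D0 ≠ 0 := by
    rw [hD0]
    simp only [ne_eq, Finset.gcd_eq_zero_iff]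
    intro h
    exact hc 0 (h 0 (Finset.mem_univ 0))
  have hdvd : ∀ i, D0 ∣ c i := fun i => hD0 ▸ Finset.gcd_dvd (Finset.mem_univ i)
  obtain ⟨k, hk⟩ := hdvd 0
  have hcoef : ∀ i : Fin (n + 2), c 0 * c i / D0 = c i * k := by
    intro i
    rw [hk, mul_assoc, Int.mul_ediv_cancel_left _ hD0ne]
    ring
  obtain ⟨x, hx⟩ := bezout_finset Finset.univ c
  refine ⟨fun i => N * x i.castSucc, N * k * x (Fin.last (n + 1)), ?_⟩
  have hsplit := Fin.sum_univ_castSucc (fun i : Fin (n + 2) => c i * x i)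
  rw [hsplit] at hx
  calc (∑ i : Fin (n + 1), (c 0 * c i.castSucc / D0) * (N * x i.castSucc)) +
        c (Fin.last (n + 1)) * (N * k * x (Fin.last (n + 1)))
      = N * k * ((∑ i : Fin (n + 1), c i.castSucc * x i.castSucc) +
          c (Fin.last (n + 1)) * x (Fin.last (n + 1))) := by
        simp only [hcoef, mul_add, Finset.mul_sum]
        congr 1
        · exact Finset.sum_congr rfl fun i _ => by ring
        · ring
    _ = N * k * Finset.univ.gcd c := by rw [hx]
    _ = N * c 0 := by rw [← hD0, hk]; ring
end

section
/- Let $(S_j)_{j=1}^t$ be pairwise disjoint finite sets of primes with $|S_j|=n_j\geq 3$, and for each $j$ let $\Lambda_j, \Lambda_j'$ be the corresponding subgroups of $\mathbb{Q}^\times\times\mathbb{Q}^\times$ from the wild construction. Set $\Gamma_t = \Lambda_1\cdots\Lambda_t$ and $\Gamma_t'=\Lambda_1'\cdots\Lambda_t'$. Then $\Gamma_t\cap\Gamma_t' = (\Lambda_1\cap\Lambda_1')\cdots(\Lambda_t\cap\Lambda_t')$ and $\mathrm{rk}_\mathbb{Z}\,\Gamma_t/(\Gamma_t\cap\Gamma_t')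 = t$. -/
open Set

lemma wildGens_snd_eq_fst {G α : Type*} [Group G] {n : ℕ} (u : Fin (n + 1) → G)
    (a b : G → α) (h0 : a 1 = b (u 0)) (hlast : a (u (Fin.last n)) = b 1)
    (hsucc : ∀ i : Fin n, a (u i.castSucc) = b (u i.succ)) (k : Fin (n + 2)) :
    a (wildGens u k).2 = b (wildGens u k).1 := by
  rcases k with ⟨k, hk⟩
  simp only [wildGens]
  split_ifs with hpos hlt hlt
  · convert hsucc ⟨k - 1, by omega⟩ using 3 <;> simp [Fin.ext_iff]
    omega
  · exact (congrArg (a ∘ u) (Fin.ext (by simp; omega))).trans hlast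
  · exact h0.trans (congrArg (b ∘ u) (Fin.ext (by simp; omega)))
  · omega

lemma padicValRat_natCast_prime {p m : ℕ} [Fact p.Prime] [Fact m.Prime] :
    padicValRat p m = if p = m then 1 else 0 := by
  split_ifs with h
  · subst h
    exact padicValRat.self (Fact.out : p.Prime).one_lt
  · rw [← padicValRat_of_nat, padicValNat_primes h, Nat.cast_zero]

def valuationGap {ι : Type*} (p r : ι → ℕ) [∀ i, Fact (p i).Prime] [∀ i, Fact (r i).Prime] :
    ℚˣ × ℚˣ →* Multiplicative (ι → ℤ) where
  toFun z := .ofAdd fun i => padicValRat (p i) z.2 - padicValRat (r i) z.1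
  map_one' := by simp; rfl
  map_mul' z w := by
    rw [← ofAdd_add]
    congr 1
    funext i
    simp only [Prod.snd_mul, Prod.fst_mul, Units.val_mul,
      padicValRat.mul (Units.ne_zero _) (Units.ne_zero _), Pi.add_apply]
    ring

@[simp]
lemma toAdd_valuationGap_apply {ι : Type*} (p r : ι → ℕ) [∀ i, Fact (p i).Prime]
    [∀ i, Fact (r i).Prime] (z : ℚˣ × ℚˣ) (i : ι) :
    (valuationGap p r z).toAdd i = padicValRat (p i) z.2 - padicValRat (r i) z.1 :=
  rfl

lemma Subgroup.iSup_closure_insert {G ι : Type*} [Group G] (a : ι → G) (s : ι → Set G) :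
    ⨆ i, Subgroup.closure (insert (a i) (s i)) =
      Subgroup.closure (⋃ i, s i) ⊔ Subgroup.closure (range a) := by
  rw [← Subgroup.closure_iUnion, iUnion_insert_eq_range_union_iUnion, Subgroup.closure_union,
    sup_comm]

lemma disjoint_closure_range_ker {G A ι : Type*} [CommGroup G] [AddCommGroup A] [Fintype ι]
    (θ : G →* Multiplicative A) (g : ι → G)
    (hg : LinearIndependent ℤ fun i => (θ (g i)).toAdd) :
    Disjoint (Subgroup.closure (range g)) θ.ker := by
  rw [Subgroup.disjoint_def]
  intro k hk hker
  obtain ⟨a, rfl⟩ := Subgroup.mem_closure_range_iff_of_fintype.1 hk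
  have hsum : ∑ i, a i • (θ (g i)).toAdd = 0 := by
    simpa [map_prod, map_zpow, toAdd_prod, toAdd_zpow] using congrArg Multiplicative.toAdd hker
  simp [Fintype.linearIndependent_iff.1 hg a hsum]

lemma rank_additive_quotient_ker {G ι : Type*} [CommGroup G] [Fintype ι]
    (φ : G →* Multiplicative (ι → ℤ)) (g : ι → G)
    (hg : LinearIndependent ℤ fun i => (φ (g i)).toAdd) :
    Module.rank ℤ (Additive (G ⧸ φ.ker)) = Fintype.card ι := by
  let f := (MonoidHom.toAdditiveLeft (QuotientGroup.kerLift φ)).toIntLinearMap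
  apply le_antisymm
  · have := LinearMap.lift_rank_le_of_injective f (QuotientGroup.kerLift_injective φ)
    rwa [rank_fun', Cardinal.lift_natCast, Cardinal.lift_le_nat_iff] at this
  · have hx : LinearIndependent ℤ fun i => Additive.ofMul (QuotientGroup.mk (g i) : G ⧸ φ.ker) :=
      LinearIndependent.of_comp f hg
    simpa using hx.cardinal_lift_le_rank

section WildFamilies

variable {t : ℕ} {nf : Fin t → ℕ} {q : (j : Fin t) → Fin (nf j + 3) → ℕ}
  [∀ j i, Fact (q j i).Prime] {u : (j : Fin t) → Fin (nf j + 3) → ℚˣ}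
  (hinj : Function.Injective fun x : (j : Fin t) × Fin (nf j + 3) => q x.1 x.2)
  (hu : ∀ j i, (u j i : ℚ) = q j i)
include hinj hu

lemma padicValRat_wild (j' : Fin t) (c : Fin (nf j' + 3)) (j : Fin t) (i : Fin (nf j + 3)) :
    padicValRat (q j' c) (u j i) = if j' = j ∧ (c : ℕ) = i then 1 else 0 := by
  rw [hu, padicValRat_natCast_prime]
  congr 1
  refine propext ⟨fun h => ?_, ?_⟩
  · obtain ⟨rfl, hc⟩ := Sigma.mk.inj_iff.1 (hinj h)
    exact ⟨rfl, by rw [eq_of_heq hc]⟩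
  · rintro ⟨rfl, hc⟩
    rw [Fin.ext hc]

lemma valuationGap_wildGens (j : Fin t) (k : Fin (nf j + 4)) :
    valuationGap (q · 0) (q · 1) (wildGens (u j) k) = 1 := by
  refine Multiplicative.toAdd.injective (funext fun j' => sub_eq_zero.2 ?_)
  refine wildGens_snd_eq_fst (u j) (fun x => padicValRat (q j' 0) x)
    (fun x => padicValRat (q j' 1) x) ?_ ?_ (fun i => ?_) k <;>
    simp [padicValRat_wild hinj hu, eq_comm (a := 0)]

lemma valuationGap_last_pow (j : Fin t) (M : ℕ) :
    valuationGap (q · 0) (q · 1) (u j (Fin.last _) ^ M, 1) = 1 := by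
  refine Multiplicative.toAdd.injective (funext fun j' => ?_)
  simp [padicValRat.pow, padicValRat_wild hinj hu]

lemma valuationGap_zero_pow (j : Fin t) (M : ℕ) :
    valuationGap (q · 0) (q · 1) (1, u j 0 ^ M) = .ofAdd (Pi.single j M) := by
  refine Multiplicative.toAdd.injective (funext fun j' => ?_)
  simp [padicValRat.pow, padicValRat_wild hinj hu, Pi.single_apply]

lemma closure_wildGens_le_ker :
    Subgroup.closure (⋃ j, range (wildGens (u j))) ≤ (valuationGap (q · 0) (q · 1)).ker := by
  rw [Subgroup.closure_le]
  rintro _ ⟨_, ⟨j, rfl⟩, k, rfl⟩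
  exact valuationGap_wildGens hinj hu j k

lemma closure_insert_last_pow_le_ker (j : Fin t) (M : ℕ) :
    Subgroup.closure (insert (u j (Fin.last _) ^ M, 1) (range (wildGens (u j)))) ≤
      (valuationGap (q · 0) (q · 1)).ker := by
  rw [Subgroup.closure_le]
  rintro _ (rfl | ⟨k, rfl⟩)
  · exact valuationGap_last_pow hinj hu j M
  · exact valuationGap_wildGens hinj hu j k

end WildFamilies

theorem wild_families_inf_and_rank_general (t : ℕ) (nf : Fin t → ℕ)
    (q : (j : Fin t) → Fin (nf j + 3) → ℕ)
    (hq : ∀ j i, (q j i).Prime)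
    (hinj : Function.Injective
      (fun x : (j : Fin t) × Fin (nf j + 3) => q x.1 x.2))
    (N N' : Fin t → ℕ) (hN : ∀ j, 1 ≤ N j)
    (u : (j : Fin t) → Fin (nf j + 3) → ℚˣ)
    (hu : ∀ j i, (u j i : ℚ) = (q j i : ℚ))
    (Λ Λ' : Fin t → Subgroup (ℚˣ × ℚˣ))
    (hΛ : ∀ j, Λ j = Subgroup.closure
        (insert ((1 : ℚˣ), (u j 0) ^ (N j)) (Set.range (wildGens (u j)))))
    (hΛ' : ∀ j, Λ' j = Subgroup.closure
        (insert ((u j (Fin.last (nf j + 2))) ^ (N' j), (1 : ℚˣ))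
          (Set.range (wildGens (u j))))) :
    (⨆ j, Λ j) ⊓ (⨆ j, Λ' j) = ⨆ j, (Λ j ⊓ Λ' j) ∧
    Module.rank ℤ (Additive
        (↥(⨆ j, Λ j) ⧸ (((⨆ j, Λ j) ⊓ (⨆ j, Λ' j)).subgroupOf (⨆ j, Λ j))))
      = (t : Cardinal) := by
  have := fun j i => Fact.mk (hq j i)
  set θ := valuationGap (q · 0) (q · 1)
  set e : Fin t → ℚˣ × ℚˣ := fun j => (1, u j 0 ^ N j)
  set W := Subgroup.closure (⋃ j, range (wildGens (u j)))
  have hΓ : ⨆ j, Λ j = W ⊔ Subgroup.closure (range e) := by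
    simp_rw [hΛ]
    exact Subgroup.iSup_closure_insert e _
  have hΓ' : ⨆ j, Λ' j ≤ θ.ker :=
    iSup_le fun j => (hΛ' j).trans_le (closure_insert_last_pow_le_ker hinj hu j _)
  have hWinf : W ≤ ⨆ j, Λ j ⊓ Λ' j := by
    refine (Subgroup.closure_iUnion _).trans_le (iSup_mono fun j => le_inf ?_ ?_)
    · rw [hΛ j]
      exact Subgroup.closure_mono (subset_insert _ _)
    · rw [hΛ' j]
      exact Subgroup.closure_mono (subset_insert _ _)
  have he : LinearIndependent ℤ fun j => (θ (e j)).toAdd := by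
    simp only [e, θ, valuationGap_zero_pow hinj hu, toAdd_ofAdd]
    exact Pi.linearIndependent_single_of_ne_zero fun j =>
      Int.natCast_ne_zero.2 (Nat.one_le_iff_ne_zero.1 (hN j))
  have hker : (⨆ j, Λ j) ⊓ θ.ker = W := by
    rw [hΓ, sup_inf_assoc_of_le _ (closure_wildGens_le_ker hinj hu),
      (disjoint_closure_range_ker θ e he).eq_bot, sup_bot_eq]
  have hsup : ⨆ j, Λ j ⊓ Λ' j ≤ (⨆ j, Λ j) ⊓ ⨆ j, Λ' j :=
    le_inf (iSup_mono fun _ => inf_le_left) (iSup_mono fun _ => inf_le_right)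
  have hinf : (⨆ j, Λ j) ⊓ (⨆ j, Λ' j) = (⨆ j, Λ j) ⊓ θ.ker :=
    le_antisymm (inf_le_inf_left _ hΓ') (hker ▸ hWinf.trans hsup)
  refine ⟨le_antisymm (by rw [hinf, hker]; exact hWinf) hsup, ?_⟩
  have he_mem (j : Fin t) : e j ∈ ⨆ j, Λ j :=
    hΓ ▸ Subgroup.mem_sup_right (Subgroup.subset_closure (mem_range_self j))
  rw [hinf, Subgroup.inf_subgroupOf_left, ← Subgroup.comap_subtype, MonoidHom.comap_ker]
  simpa using
    rank_additive_quotient_ker (θ.comp (⨆ j, Λ j).subtype) (fun j => ⟨e j, he_mem j⟩) he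

/-- Let `S₁, …, S_t` be pairwise disjoint sets of primes
`S_j = {q j 0, …, q j (nf j + 2)}` (each of size `nf j + 3 ≥ 3`), and for each `j` let
`Λ j = ⟨λ_j, λ_{1j}, …⟩` and `Λ' j = ⟨λ_{1j}, …, λ'_j⟩` be the corresponding subgroups of
`ℚˣ × ℚˣ` from the wild construction (with parameters `N j, N' j ≥ 1`). Set
`Γ_t = Λ 1 ⋯ Λ t = ⨆ j, Λ j` and `Γ'_t = ⨆ j, Λ' j`. Then
`Γ_t ⊓ Γ'_t = ⨆ j, (Λ j ⊓ Λ' j)` and the quotient `Γ_t / (Γ_t ⊓ Γ'_t)` has rank `t`. -/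
theorem wild_families_inf_and_rank (t : ℕ) (nf : Fin t → ℕ)
    (q : (j : Fin t) → Fin (nf j + 3) → ℕ)
    (hq : ∀ j i, (q j i).Prime)
    (hinj : Function.Injective
      (fun x : (j : Fin t) × Fin (nf j + 3) => q x.1 x.2))
    (N N' : Fin t → ℕ) (hN : ∀ j, 1 ≤ N j) (hN' : ∀ j, 1 ≤ N' j)
    (u : (j : Fin t) → Fin (nf j + 3) → ℚˣ)
    (hu : ∀ j i, (u j i : ℚ) = (q j i : ℚ))
    (Λ Λ' : Fin t → Subgroup (ℚˣ × ℚˣ))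
    (hΛ : ∀ j, Λ j = Subgroup.closure
        (insert ((1 : ℚˣ), (u j 0) ^ (N j)) (Set.range (wildGens (u j)))))
    (hΛ' : ∀ j, Λ' j = Subgroup.closure
        (insert ((u j (Fin.last (nf j + 2))) ^ (N' j), (1 : ℚˣ))
          (Set.range (wildGens (u j))))) :
    (⨆ j, Λ j) ⊓ (⨆ j, Λ' j) = ⨆ j, (Λ j ⊓ Λ' j) ∧
    Module.rank ℤ (Additive
        (↥(⨆ j, Λ j) ⧸ (((⨆ j, Λ j) ⊓ (⨆ j, Λ' j)).subgroupOf (⨆ j, Λ j))))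
      = (t : Cardinal) :=
  wild_families_inf_and_rank_general t nf q hq hinj N N' hN u hu Λ Λ' hΛ hΛ'
end
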